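/- arXiv:1402.6787 — 4 statements merged into one kernel-verified Lean document; each statement's English description precedes it below -/
import Mathlib

section
/- Let E_1,...,E_k be the edge sets of k independent graphs on a common vertex set V, each distributed as a depth-1 MFNG sample from W_1(P,ℓ) (with independently drawn categories in each graph). Then the intersection graph G=(V, ∩_{i=1}^k E_i) has the same distribution as a sample from the depth-k measure W_k(P,ℓ). -/
/-!
Given the categories, the edges of an MFNG sample are independent Bernoulli variables, and the
conjunction of independent Bernoulli variables with parameters `q i` is Bernoulli with parameter
`∏ i, q i`. So, conditionally on the categories `c i` of the `k` depth-1 samples, the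
intersection graph has independent edges with probabilities `∏ i, P (c i u) (c i v)`. Reading the
`k` independent category assignments as the `k` coordinates of one depth-`k` assignment turns
this into the conditional law of a depth-`k` sample, and averaging over categories finishes.
-/

open Finset

/-- The joint law of the edge indicators of a depth-`k` MFNG sample
`W_k(P, l)` on `n` nodes: the probability of observing the edge
configuration `E` (on unordered pairs of distinct vertices, represented by
pairs `p` with `p.1 < p.2`). Each node independently receives a `k`-tuple of
categories with coordinates i.i.d. distributed by `l`, and conditional on
categories each pair is independently an edge with probability
`∏ r, P (c u r) (c v r)`. -/
noncomputable def mfngLaw (m n k : ℕ) (P : Fin m → Fin m → ℝ) (l : Fin m → ℝ)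
    (E : {p : Fin n × Fin n // p.1 < p.2} → Bool) : ℝ :=
  ∑ c : Fin n → Fin k → Fin m,
    (∏ u, ∏ r, l (c u r)) *
      ∏ p : {p : Fin n × Fin n // p.1 < p.2},
        (if E p then ∏ r, P (c p.1.1 r) (c p.1.2 r)
         else 1 - ∏ r, P (c p.1.1 r) (c p.1.2 r))

def bernoulliWeight {R : Type*} [Ring R] (q : R) (b : Bool) : R :=
  if b then q else 1 - q

section Bernoulli

variable {ι R : Type*} [Fintype ι] [DecidableEq ι] [CommRing R]

theorem sum_prod_bernoulliWeight (q : ι → R) :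
    ∑ b : ι → Bool, ∏ i, bernoulliWeight (q i) (b i) = 1 := by
  rw [← Fintype.prod_sum]
  simp [bernoulliWeight]

theorem sum_boole_forall_mul_prod_bernoulliWeight (q : ι → R) :
    ∑ b : ι → Bool, (if ∀ i, b i = true then 1 else 0) * ∏ i, bernoulliWeight (q i) (b i)
      = ∏ i, q i := by
  rw [Fintype.sum_eq_single fun _ => true]
  · simp [bernoulliWeight]
  · intro b hb
    have : ¬ ∀ i, b i = true := fun h => hb (funext h)
    simp [this]

theorem sum_boole_forall_iff_mul_prod_bernoulliWeight (q : ι → R) (e : Bool) :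
    ∑ b : ι → Bool,
        (if (∀ i, b i = true) ↔ e = true then 1 else 0) * ∏ i, bernoulliWeight (q i) (b i)
      = bernoulliWeight (∏ i, q i) e := by
  cases e
  · have hnot (b : ι → Bool) : (if (∀ i, b i = true) ↔ false = true then (1 : R) else 0)
        = 1 - if ∀ i, b i = true then 1 else 0 := by
      split_ifs <;> simp_all
    simp_rw [hnot, sub_mul, one_mul, sum_sub_distrib, sum_prod_bernoulliWeight,
      sum_boole_forall_mul_prod_bernoulliWeight]
    rfl
  · simpa [bernoulliWeight] using sum_boole_forall_mul_prod_bernoulliWeight q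

theorem sum_boole_intersection_mul_prod_bernoulliWeight {V : Type*} [Fintype V] [DecidableEq V]
    (q : ι → V → R) (E : V → Bool)
    [DecidablePred fun Es : ι → V → Bool => ∀ p, ((∀ i, Es i p = true) ↔ E p = true)] :
    ∑ Es : ι → V → Bool,
        (∏ i, ∏ p, bernoulliWeight (q i p) (Es i p)) *
          (if ∀ p, ((∀ i, Es i p = true) ↔ E p = true) then 1 else 0)
      = ∏ p, bernoulliWeight (∏ i, q i p) (E p) := by
  rw [Fintype.sum_equiv (Equiv.piComm fun (_ : ι) (_ : V) => Bool) _
    (fun b : V → ι → Bool => ∏ p, (if (∀ i, b p i = true) ↔ E p = true then 1 else 0) *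
      ∏ i, bernoulliWeight (q i p) (b p i)) fun Es => ?_]
  · rw [← Fintype.prod_sum fun p (b : ι → Bool) =>
      (if (∀ i, b i = true) ↔ E p = true then 1 else 0) * ∏ i, bernoulliWeight (q i p) (b i)]
    simp_rw [sum_boole_forall_iff_mul_prod_bernoulliWeight]
  · rw [prod_mul_distrib, prod_boole, prod_comm, mul_comm]
    simp [Equiv.piComm]

end Bernoulli

theorem mfngLaw_eq_sum_layers (m n k : ℕ) (P : Fin m → Fin m → ℝ) (l : Fin m → ℝ)
    (E : {p : Fin n × Fin n // p.1 < p.2} → Bool) :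
    mfngLaw m n k P l E = ∑ c : Fin k → Fin n → Fin m, (∏ r, ∏ u, l (c r u)) *
      ∏ p : {p : Fin n × Fin n // p.1 < p.2},
        bernoulliWeight (∏ r, P (c r p.1.1) (c r p.1.2)) (E p) := by
  refine Fintype.sum_equiv (Equiv.piComm fun (_ : Fin n) (_ : Fin k) => Fin m) _ _ fun c => ?_
  rw [prod_comm]
  rfl

theorem mfngLaw_one (m n : ℕ) (P : Fin m → Fin m → ℝ) (l : Fin m → ℝ)
    (E : {p : Fin n × Fin n // p.1 < p.2} → Bool) :
    mfngLaw m n 1 P l E = ∑ c : Fin n → Fin m, (∏ u, l (c u)) *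
      ∏ p : {p : Fin n × Fin n // p.1 < p.2}, bernoulliWeight (P (c p.1.1) (c p.1.2)) (E p) := by
  rw [mfngLaw_eq_sum_layers]
  exact Fintype.sum_equiv (Equiv.funUnique (Fin 1) _) _ _ fun c => by simp

theorem mfng_intersection_law_general (m n k : ℕ)
    (P : Fin m → Fin m → ℝ)
    (l : Fin m → ℝ)
    (E : {p : Fin n × Fin n // p.1 < p.2} → Bool) :
    ∑ Es : Fin k → ({p : Fin n × Fin n // p.1 < p.2} → Bool),
        (∏ i, mfngLaw m n 1 P l (Es i)) *
          (if ∀ p, ((∀ i, Es i p = true) ↔ E p = true) then 1 else 0)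
      = mfngLaw m n k P l E := by
  calc _ = ∑ Es : Fin k → ({p : Fin n × Fin n // p.1 < p.2} → Bool),
          ∑ c : Fin k → Fin n → Fin m, (∏ i, ∏ u, l (c i u)) *
            ((∏ i, ∏ p, bernoulliWeight (P (c i p.1.1) (c i p.1.2)) (Es i p)) *
              (if ∀ p, ((∀ i, Es i p = true) ↔ E p = true) then 1 else 0)) := by
        simp_rw [mfngLaw_one, Fintype.prod_sum, Finset.prod_mul_distrib, sum_mul, mul_assoc]
    _ = ∑ c : Fin k → Fin n → Fin m, (∏ i, ∏ u, l (c i u)) *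
          ∏ p : {p : Fin n × Fin n // p.1 < p.2},
            bernoulliWeight (∏ i, P (c i p.1.1) (c i p.1.2)) (E p) := by
        rw [sum_comm]
        simp_rw [← mul_sum, sum_boole_intersection_mul_prod_bernoulliWeight]
    _ = mfngLaw m n k P l E := (mfngLaw_eq_sum_layers m n k P l E).symm

/-- the intersection of `k` independent depth-1 MFNG samples
from `W_1(P, l)` has the same distribution as a depth-`k` sample from
`W_k(P, l)`: for every edge configuration `E`, the probability that the
pointwise intersection of the `k` independent depth-1 samples equals `E`
is `mfngLaw m n k P l E`. -/
theorem mfng_intersection_law (m n k : ℕ)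
    (P : Fin m → Fin m → ℝ)
    (hsymm : ∀ i j, P i j = P j i)
    (hP0 : ∀ i j, 0 ≤ P i j) (hP1 : ∀ i j, P i j ≤ 1)
    (l : Fin m → ℝ) (hl0 : ∀ i, 0 ≤ l i) (hl1 : ∑ i, l i = 1)
    (E : {p : Fin n × Fin n // p.1 < p.2} → Bool) :
    ∑ Es : Fin k → ({p : Fin n × Fin n // p.1 < p.2} → Bool),
        (∏ i, mfngLaw m n 1 P l (Es i)) *
          (if ∀ p, ((∀ i, Es i p = true) ↔ E p = true) then 1 else 0)
      = mfngLaw m n k P l E :=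
  mfng_intersection_law_general m n k P l E
end

section
/- Let A be an event of the form A = {S ⊆ E_G} for a fixed set S of vertex pairs. If G is sampled from the depth-k MFNG measure W_k(P,ℓ) and H is sampled from the depth-1 measure W_1(P,ℓ) on the same vertex set, then P_{W_k}(S ⊆ E_G) = (P_{W_1}(S ⊆ E_H))^k. -/
/-!
A depth-`k` category assignment `c : V → Fin k → α` is the same as `k` independent depth-one
assignments (its layers `fun u ↦ c u r`), and both the prior weight `∏ u, ∏ r, l (c u r)` and the
edge probabilities `∏ r, P (c u r) (c v r)` factor over the layers. So the weight of `c` is the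
product of the depth-one weights of its layers, and summing over all `c` gives the `k`-th power of
the depth-one sum.
-/

open Finset

/-- The probability, under the depth-`k` MFNG measure `W_k(P, l)` on `n`
nodes, that every vertex pair in `S` is an edge of the sampled graph:
averaging over the i.i.d. category assignments, each pair in `S` is
(conditionally independently) an edge with probability
`∏ r, P (c p.1 r) (c p.2 r)`. -/
noncomputable def probSubset (m n k : ℕ) (P : Fin m → Fin m → ℝ)
    (l : Fin m → ℝ) (S : Finset (Fin n × Fin n)) : ℝ :=
  ∑ c : Fin n → Fin k → Fin m,
    (∏ u, ∏ r, l (c u r)) * ∏ p ∈ S, ∏ r, P (c p.1 r) (c p.2 r)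

theorem Fintype.sum_prod_layers_eq_pow {V α R : Type*} [Fintype V] [DecidableEq V] [Fintype α]
    [CommSemiring R] (f : (V → α) → R) (k : ℕ) :
    ∑ c : V → Fin k → α, ∏ r, f (fun u ↦ c u r) = (∑ d, f d) ^ k := by
  rw [Fintype.sum_pow]
  exact (Equiv.piComm fun (_ : V) (_ : Fin k) ↦ α).sum_comp fun g ↦ ∏ r, f (g r)

def subsetWeight {V α R : Type*} [Fintype V] [CommMonoid R] (P : α → α → R) (l : α → R)
    (S : Finset (V × V)) (d : V → α) : R :=
  (∏ u, l (d u)) * ∏ p ∈ S, P (d p.1) (d p.2)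

theorem probSubset_eq_sum_subsetWeight_pow (m n k : ℕ) (P : Fin m → Fin m → ℝ)
    (l : Fin m → ℝ) (S : Finset (Fin n × Fin n)) :
    probSubset m n k P l S = (∑ d, subsetWeight P l S d) ^ k := by
  rw [← Fintype.sum_prod_layers_eq_pow]
  refine Fintype.sum_congr _ _ fun c ↦ ?_
  rw [Finset.prod_comm, Finset.prod_comm (s := S), ← Finset.prod_mul_distrib]
  rfl

theorem mfng_subset_prob_pow_general (m n k : ℕ)
    (P : Fin m → Fin m → ℝ)
    (l : Fin m → ℝ)
    (S : Finset (Fin n × Fin n)) :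
    probSubset m n k P l S = (probSubset m n 1 P l S) ^ k := by
  rw [probSubset_eq_sum_subsetWeight_pow, probSubset_eq_sum_subsetWeight_pow, pow_one]

/-- for any fixed set `S` of (unordered, distinct) vertex
pairs, the probability that `S ⊆ E_G` under the depth-`k` measure is the
`k`-th power of the probability that `S ⊆ E_H` under the depth-1 measure. -/
theorem mfng_subset_prob_pow (m n k : ℕ)
    (P : Fin m → Fin m → ℝ)
    (hsymm : ∀ i j, P i j = P j i)
    (hP0 : ∀ i j, 0 ≤ P i j) (hP1 : ∀ i j, P i j ≤ 1)
    (l : Fin m → ℝ) (hl0 : ∀ i, 0 ≤ l i) (hl1 : ∑ i, l i = 1)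
    (S : Finset (Fin n × Fin n)) (hS : ∀ p ∈ S, p.1 < p.2) :
    probSubset m n k P l S = (probSubset m n 1 P l S) ^ k :=
  mfng_subset_prob_pow_general m n k P l S
end

section
/- For a graph on n nodes sampled from the depth-k MFNG measure W_k(P,ℓ), the probability that a fixed node u is simultaneously connected to d fixed other distinct nodes v_1,...,v_d equals (Σ_{i_1,...,i_{d+1} ∈ [m]} ∏_{j=2}^{d+1} p_{i_1 i_j} ∏_{j=1}^{d+1} ℓ_{i_j})^k. Consequently, the expected number of d-stars is n·C(n−1,d) times this quantity. -/
/-!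
Given the category tuples, the `k` levels of the MFNG are independent, so the probability of any
prescribed edge set is the `k`-th power of its probability at a single level. At a single level,
only the categories of the `d + 1` vertices of the star enter the edge probabilities; the
categories of all other vertices sum out, since `∑ ℓ = 1`.
-/

open Finset

/-- The single-level `d`-star survival probability
`∑_{i_1,…,i_{d+1}} ∏_{j=2}^{d+1} p_{i_1 i_j} ∏_{j=1}^{d+1} l_{i_j}`. -/
noncomputable def starSum (m d : ℕ) (P : Fin m → Fin m → ℝ)
    (l : Fin m → ℝ) : ℝ :=
  ∑ c : Fin (d + 1) → Fin m,
    (∏ j : Fin d, P (c 0) (c j.succ)) * ∏ j, l (c j)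

section Marginal

variable {R β γ : Type*} [CommSemiring R] [Fintype β] [Fintype γ] [DecidableEq γ] {l : β → R}

theorem sum_prod_mul_comp_inl (hl : ∑ b, l b = 1) (δ : Type*) [Fintype δ] [DecidableEq δ]
    (Q : (γ → β) → R) :
    ∑ g : γ ⊕ δ → β, (∏ x, l (g x)) * Q (g ∘ Sum.inl)
      = ∑ c : γ → β, (∏ j, l (c j)) * Q c := by
  rw [← (Equiv.sumArrowEquivProdArrow γ δ β).symm.sum_comp, Fintype.sum_prod_type]
  refine sum_congr rfl fun c _ => ?_
  have hmass : ∑ h : δ → β, ∏ y, l (h y) = 1 := by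
    rw [← Fintype.prod_sum fun _ b => l b]
    simp [hl]
  simp only [Fintype.prod_sum_type, Equiv.sumArrowEquivProdArrow_symm_apply_inl,
    Equiv.sumArrowEquivProdArrow_symm_apply_inr]
  have hinl : ∀ h, (Equiv.sumArrowEquivProdArrow γ δ β).symm (c, h) ∘ Sum.inl = c :=
    fun _ => rfl
  simp only [hinl, ← sum_mul, ← mul_sum, hmass, mul_one]

theorem sum_prod_mul_comp_of_injective (hl : ∑ b, l b = 1) {α : Type*} [Fintype α]
    [DecidableEq α] {e : γ → α} (he : Function.Injective e) (Q : (γ → β) → R) :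
    ∑ g : α → β, (∏ a, l (g a)) * Q (g ∘ e) = ∑ c : γ → β, (∏ j, l (c j)) * Q c := by
  classical
  let σ : γ ⊕ {a // a ∉ Set.range e} ≃ α :=
    (Equiv.sumCongr (Equiv.ofInjective e he) (Equiv.refl _)).trans (Equiv.sumCompl _)
  have hσ : ∀ j, σ.symm (e j) = Sum.inl j := fun j => σ.symm_apply_eq.mpr rfl
  rw [← sum_prod_mul_comp_inl hl {a // a ∉ Set.range e} Q, ← (σ.arrowCongr (Equiv.refl β)).sum_comp]
  refine sum_congr rfl fun g _ => ?_
  have hcomp : (σ.arrowCongr (Equiv.refl β) g) ∘ e = g ∘ Sum.inl := by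
    funext j
    simp [Equiv.arrowCongr_apply, hσ]
  rw [hcomp]
  congr 1
  exact σ.symm.prod_comp fun x => l (g x)

end Marginal

noncomputable def levelProb (m n : ℕ) (P : Fin m → Fin m → ℝ) (l : Fin m → ℝ)
    (S : Finset (Fin n × Fin n)) : ℝ :=
  ∑ g : Fin n → Fin m, (∏ w, l (g w)) * ∏ p ∈ S, P (g p.1) (g p.2)

theorem probSubset_eq_levelProb_pow (m n k : ℕ) (P : Fin m → Fin m → ℝ) (l : Fin m → ℝ)
    (S : Finset (Fin n × Fin n)) :
    probSubset m n k P l S = levelProb m n P l S ^ k := by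
  rw [levelProb, Fintype.sum_pow, probSubset,
    ← (Equiv.piComm fun (_ : Fin n) (_ : Fin k) => Fin m).sum_comp]
  refine sum_congr rfl fun c _ => ?_
  simp only [Equiv.piComm_apply, prod_mul_distrib]
  congr 1 <;> exact prod_comm

theorem levelProb_star {m n d : ℕ} (P : Fin m → Fin m → ℝ) {l : Fin m → ℝ}
    (hl : ∑ i, l i = 1) (u : Fin n) {v : Fin d → Fin n} (hv : Function.Injective v)
    (hvu : ∀ j, v j ≠ u) :
    levelProb m n P l (image (fun j => (u, v j)) univ) = starSum m d P l := by
  have hcons : Function.Injective (Fin.cons u v : Fin (d + 1) → Fin n) :=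
    Fin.cons_injective_iff.2 ⟨by rintro ⟨j, rfl⟩; exact hvu j rfl, hv⟩
  have hpair : Function.Injective fun j => (u, v j) := fun _ _ h => hv (congrArg Prod.snd h)
  simp only [starSum, mul_comm (∏ j : Fin d, _)]
  rw [← sum_prod_mul_comp_of_injective hl hcons, levelProb]
  refine sum_congr rfl fun g _ => ?_
  simp [prod_image fun a _ b _ h => hpair h]

theorem probSubset_star (m n k d : ℕ) (P : Fin m → Fin m → ℝ) {l : Fin m → ℝ}
    (hl : ∑ i, l i = 1) (u : Fin n) {v : Fin d → Fin n} (hv : Function.Injective v)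
    (hvu : ∀ j, v j ≠ u) :
    probSubset m n k P l (image (fun j => (u, v j)) univ) = starSum m d P l ^ k := by
  rw [probSubset_eq_levelProb_pow, levelProb_star P hl u hv hvu]

theorem probSubset_star_of_mem_powersetCard (m k : ℕ) (P : Fin m → Fin m → ℝ)
    {l : Fin m → ℝ} (hl : ∑ i, l i = 1) {n d : ℕ} {u : Fin n} {T : Finset (Fin n)}
    (hT : T ∈ (univ.erase u).powersetCard d) :
    probSubset m n k P l (T.image fun t => (u, t)) = starSum m d P l ^ k := by
  obtain ⟨hTu, hTcard⟩ := mem_powersetCard.1 hT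
  have hvu (j : Fin d) : T.orderEmbOfFin hTcard j ≠ u :=
    ne_of_mem_erase (hTu (T.orderEmbOfFin_mem hTcard j))
  have himg : T.image (fun t => (u, t))
      = (univ.image (T.orderEmbOfFin hTcard)).image fun t => (u, t) := by
    rw [image_orderEmbOfFin_univ]
  rw [himg, image_image]
  exact probSubset_star m n k d P hl u (T.orderEmbOfFin hTcard).injective hvu

theorem mfng_star_prob_and_expected_stars_general (m n k d : ℕ)
    (P : Fin m → Fin m → ℝ)
    (l : Fin m → ℝ) (hl1 : ∑ i, l i = 1) :
    (∀ (u : Fin n) (v : Fin d → Fin n), Function.Injective v →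
        (∀ j, v j ≠ u) →
        probSubset m n k P l (Finset.image (fun j => (u, v j)) univ)
          = (starSum m d P l) ^ k) ∧
    (∑ u : Fin n, ∑ T ∈ (univ.erase u).powersetCard d,
        probSubset m n k P l (T.image fun t => (u, t))
      = (n : ℝ) * ((n - 1).choose d : ℝ) * (starSum m d P l) ^ k) := by
  refine ⟨fun u v hv hvu => probSubset_star m n k d P hl1 u hv hvu, ?_⟩
  calc _ = ∑ u : Fin n, ∑ _T ∈ (univ.erase u).powersetCard d, starSum m d P l ^ k :=
        sum_congr rfl fun u _ => sum_congr rfl fun T hT =>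
          probSubset_star_of_mem_powersetCard m k P hl1 hT
    _ = _ := by simp [card_powersetCard, mul_assoc]

/-- the probability that a fixed node `u` is simultaneously
connected to `d` fixed other distinct nodes is `(starSum m d P l) ^ k`, and
the expected number of `d`-stars is `n * C(n-1, d)` times this quantity. -/
theorem mfng_star_prob_and_expected_stars (m n k d : ℕ)
    (P : Fin m → Fin m → ℝ)
    (hsymm : ∀ i j, P i j = P j i)
    (hP0 : ∀ i j, 0 ≤ P i j) (hP1 : ∀ i j, P i j ≤ 1)
    (l : Fin m → ℝ) (hl0 : ∀ i, 0 ≤ l i) (hl1 : ∑ i, l i = 1) :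
    (∀ (u : Fin n) (v : Fin d → Fin n), Function.Injective v →
        (∀ j, v j ≠ u) →
        probSubset m n k P l (Finset.image (fun j => (u, v j)) univ)
          = (starSum m d P l) ^ k) ∧
    (∑ u : Fin n, ∑ T ∈ (univ.erase u).powersetCard d,
        probSubset m n k P l (T.image fun t => (u, t))
      = (n : ℝ) * ((n - 1).choose d : ℝ) * (starSum m d P l) ^ k) :=
  mfng_star_prob_and_expected_stars_general m n k d P l hl1
end

section
/- For a graph on n nodes sampled from depth-k MFNG W_k(P,ℓ), the probability that t fixed distinct nodes form a t-clique equals s_t^k where s_t = Σ_{i_1,...,i_t ∈ [m]} (∏_{1 ≤ j < q ≤ t} p_{i_j i_q}) ℓ_{i_1}⋯ℓ_{i_t}. Hence the expected number of t-cliques is C(n,t)·s_t^k. -/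
/-
Conditionally on the categories, the k levels contribute independent factors, so summing over
category assignments factors level by level and the probability of any edge set is the k-th power
of its one-level value. At one level, each vertex outside a clique on distinct vertices carries
only its own category weight, whose sum ∑ ℓ = 1 drops out, leaving s_t. The t-subsets of the
vertices are cliques on `Fin t` through their order embeddings, which gives the expectation.
-/

open Finset

/-- The single-level `t`-clique survival probability
`s_t = ∑_{i_1,…,i_t} (∏_{j<q} p_{i_j i_q}) l_{i_1} ⋯ l_{i_t}`. -/
noncomputable def cliqueSum (m t : ℕ) (P : Fin m → Fin m → ℝ)
    (l : Fin m → ℝ) : ℝ :=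
  ∑ c : Fin t → Fin m,
    (∏ p ∈ univ.filter (fun p : Fin t × Fin t => p.1 < p.2),
        P (c p.1) (c p.2)) * ∏ j, l (c j)

section

variable {V W ι R : Type*} [Fintype V] [Fintype W] [DecidableEq V] [DecidableEq W] [Fintype ι]
  [CommSemiring R]

theorem Fintype.sum_piComm_prod_eq_pow (κ : Type*) [Fintype κ] [DecidableEq κ]
    (F : (V → ι) → R) :
    ∑ c : V → κ → ι, ∏ r, F (fun u => c u r) = (∑ d, F d) ^ Fintype.card κ := by
  rw [← Finset.card_univ, ← Finset.prod_const, Fintype.prod_sum]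
  exact Fintype.sum_equiv (Equiv.piComm _) _ _ fun _ => rfl

theorem Fintype.sum_prod_mul_comp_of_injective {l : ι → R} (hl : ∑ i, l i = 1)
    (G : (W → ι) → R) {f : W → V} (hf : f.Injective) :
    ∑ d : V → ι, (∏ u, l (d u)) * G (d ∘ f) =
      ∑ c : W → ι, (∏ j, l (c j)) * G c := by
  let C := ↥(Set.range f)ᶜ
  let e : W ⊕ C ≃ V :=
    ((Equiv.ofInjective f hf).sumCongr (Equiv.refl _)).trans (Equiv.Set.sumCompl _)
  calc ∑ d : V → ι, (∏ u, l (d u)) * G (d ∘ f)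
      = ∑ g : W ⊕ C → ι, (∏ x, l (g x)) * G (g ∘ Sum.inl) :=
        Fintype.sum_equiv (e.symm.arrowCongr (Equiv.refl ι)) _ _ fun d => by
          rw [← e.prod_comp]; rfl
    _ = ∑ p : (W → ι) × (C → ι), ((∏ w, l (p.1 w)) * G p.1) * ∏ u, l (p.2 u) :=
        Fintype.sum_equiv (Equiv.sumArrowEquivProdArrow _ _ _) _ _ fun g => by
          rw [Fintype.prod_sum_type, mul_right_comm]; rfl
    _ = (∑ c : W → ι, (∏ j, l (c j)) * G c) * ∑ h : C → ι, ∏ u, l (h u) := by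
        rw [Fintype.sum_prod_type, Finset.sum_mul_sum]
    _ = ∑ c : W → ι, (∏ j, l (c j)) * G c := by
        classical
        rw [← Fintype.prod_sum, hl, Finset.prod_const_one, mul_one]

def singleLevelProb (P : ι → ι → R) (l : ι → R) (S : Finset (V × V)) : R :=
  ∑ d : V → ι, (∏ u, l (d u)) * ∏ p ∈ S, P (d p.1) (d p.2)

theorem singleLevelProb_image_prodMap {l : ι → R} (hl : ∑ i, l i = 1) (P : ι → ι → R)
    (S : Finset (W × W)) {f : W → V} (hf : f.Injective) :
    singleLevelProb P l (S.image (Prod.map f f)) = singleLevelProb P l S := by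
  simp only [singleLevelProb, prod_image (hf.prodMap hf).injOn, Prod.map_fst, Prod.map_snd]
  exact Fintype.sum_prod_mul_comp_of_injective hl (fun c => ∏ p ∈ S, P (c p.1) (c p.2)) hf

end

theorem probSubset_eq_singleLevelProb_pow (m n k : ℕ) (P : Fin m → Fin m → ℝ)
    (l : Fin m → ℝ) (S : Finset (Fin n × Fin n)) :
    probSubset m n k P l S = singleLevelProb P l S ^ k := by
  rw [probSubset, singleLevelProb]
  conv_rhs => rw [← Fintype.card_fin k, ← Fintype.sum_piComm_prod_eq_pow]
  refine sum_congr rfl fun c _ => ?_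
  rw [prod_mul_distrib, prod_comm, prod_comm (s := S)]

theorem cliqueSum_eq_singleLevelProb (m t : ℕ) (P : Fin m → Fin m → ℝ) (l : Fin m → ℝ) :
    cliqueSum m t P l = singleLevelProb P l (univ.filter fun p : Fin t × Fin t => p.1 < p.2) :=
  sum_congr rfl fun _ _ => mul_comm _ _

theorem probSubset_image_clique {m n k t : ℕ} (P : Fin m → Fin m → ℝ) {l : Fin m → ℝ}
    (hl : ∑ i, l i = 1) {f : Fin t → Fin n} (hf : f.Injective) :
    probSubset m n k P l ((univ.filter fun p : Fin t × Fin t => p.1 < p.2).image (Prod.map f f)) =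
      cliqueSum m t P l ^ k := by
  rw [probSubset_eq_singleLevelProb_pow, singleLevelProb_image_prodMap hl P _ hf,
    cliqueSum_eq_singleLevelProb]

theorem Finset.filter_lt_product_self_eq_image {α : Type*} [LinearOrder α] (T : Finset α)
    {t : ℕ} (h : #T = t) :
    {p ∈ T ×ˢ T | p.1 < p.2} = (univ.filter fun p : Fin t × Fin t => p.1 < p.2).image
      (Prod.map (T.orderEmbOfFin h) (T.orderEmbOfFin h)) := by
  conv_lhs => rw [← image_orderEmbOfFin_univ T h, ← prodMap_image_product, univ_product_univ,
    filter_image]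
  simp [(T.orderEmbOfFin h).lt_iff_lt]

theorem mfng_clique_prob_and_expected_cliques_general (m n k t : ℕ)
    (P : Fin m → Fin m → ℝ)
    (l : Fin m → ℝ) (hl1 : ∑ i, l i = 1) :
    (∀ f : Fin t → Fin n, Function.Injective f →
        probSubset m n k P l
          (Finset.image (fun p => (f p.1, f p.2))
            (univ.filter fun p : Fin t × Fin t => p.1 < p.2))
          = (cliqueSum m t P l) ^ k) ∧
    (∑ T ∈ (univ : Finset (Fin n)).powersetCard t,
        probSubset m n k P l ((T ×ˢ T).filter fun p => p.1 < p.2)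
      = (n.choose t : ℝ) * (cliqueSum m t P l) ^ k) := by
  have hsubset : ∀ T ∈ (univ : Finset (Fin n)).powersetCard t,
      probSubset m n k P l {p ∈ T ×ˢ T | p.1 < p.2} = cliqueSum m t P l ^ k := fun T hT => by
    rw [filter_lt_product_self_eq_image T (mem_powersetCard.1 hT).2]
    exact probSubset_image_clique P hl1 (T.orderEmbOfFin _).injective
  refine ⟨fun _ hf => probSubset_image_clique P hl1 hf, ?_⟩
  rw [sum_congr rfl hsubset, sum_const, card_powersetCard, card_univ, Fintype.card_fin,
    nsmul_eq_mul]

/-- `t` fixed distinct nodes form a `t`-clique with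
probability `s_t ^ k`, and the expected number of `t`-cliques is
`C(n,t) * s_t ^ k`. -/
theorem mfng_clique_prob_and_expected_cliques (m n k t : ℕ)
    (P : Fin m → Fin m → ℝ)
    (hsymm : ∀ i j, P i j = P j i)
    (hP0 : ∀ i j, 0 ≤ P i j) (hP1 : ∀ i j, P i j ≤ 1)
    (l : Fin m → ℝ) (hl0 : ∀ i, 0 ≤ l i) (hl1 : ∑ i, l i = 1) :
    (∀ f : Fin t → Fin n, Function.Injective f →
        probSubset m n k P l
          (Finset.image (fun p => (f p.1, f p.2))
            (univ.filter fun p : Fin t × Fin t => p.1 < p.2))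
          = (cliqueSum m t P l) ^ k) ∧
    (∑ T ∈ (univ : Finset (Fin n)).powersetCard t,
        probSubset m n k P l ((T ×ˢ T).filter fun p => p.1 < p.2)
      = (n.choose t : ℝ) * (cliqueSum m t P l) ^ k) :=
  mfng_clique_prob_and_expected_cliques_general m n k t P l hl1
end
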